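/- Let p be a prime and G a noncyclic 2-generated finite p-group. Then Δ(G) is Hamiltonian. -/

import Mathlib

/-!
Write `Φ` for the Frattini subgroup of `G`. In a finite `p`-group every maximal subgroup is
normal of index `p`, so `G/Φ` is abelian of exponent `p`; being noncyclic and 2-generated it has
order `p²`. As `Φ` consists of non-generators, `g` and `h` generate `G` iff their images do,
i.e. iff the images are nontrivial and span distinct subgroups of order `p`. So `Δ(G)` is the
complete multipartite graph whose parts are the preimages of these subgroups minus `1`, all of
size `(p - 1)|Φ|`, and visiting the parts in round-robin order gives a Hamiltonian cycle.
-/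

open SimpleGraph

/-- The generating graph of a group: `g ~ h` iff `g ≠ h` and `⟨g,h⟩ = G`. -/
def genGraph (G : Type*) [Group G] : SimpleGraph G where
  Adj g h := g ≠ h ∧ Subgroup.closure {g, h} = ⊤
  symm := by
    constructor
    rintro g h ⟨hne, hgen⟩
    exact ⟨hne.symm, by rwa [Set.pair_comm]⟩
  loopless := ⟨fun g h => h.1 rfl⟩

/-- A group is 2-generated if it is generated by two elements. -/
def TwoGenerated (G : Type*) [Group G] : Prop :=
  ∃ x y : G, Subgroup.closure {x, y} = ⊤

/-- The set of non-isolated vertices of the generating graph. -/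
def nonIso (G : Type*) [Group G] : Set G := {g | ∃ h, (genGraph G).Adj g h}

/-- `Δ(G)`: the generating graph with isolated vertices removed. -/
def deltaGraph (G : Type*) [Group G] : SimpleGraph (nonIso G) :=
  (genGraph G).induce (nonIso G)

open Subgroup
open scoped Pointwise

section Hamiltonian

variable {V : Type*} [Fintype V] [DecidableEq V] {G : SimpleGraph V}

theorem isHamiltonian_of_adj_add_one {n : ℕ} [NeZero n] (hn : 3 ≤ n) (e : Fin n ≃ V)
    (hadj : ∀ i, G.Adj (e i) (e (i + 1))) : G.IsHamiltonian := by
  have hcopy : cycleGraph n ⊑ G := by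
    refine ⟨⟨⟨e, fun {i j} hij => ?_⟩, e.injective⟩⟩
    have hone : ∀ a b : Fin n, (b - a).val = 1 → b = a + 1 := fun a b h => by
      rw [← Fin.ext (h.trans (Nat.mod_eq_of_lt (by omega)).symm : (b - a).val = (1 : Fin n).val)]
      abel
    rcases cycleGraph_adj'.mp hij with h | h
    · exact (hone j i h ▸ hadj j).symm
    · exact hone i j h ▸ hadj i
  intro _
  obtain ⟨v, c, hc, hlen⟩ := (cycleGraph_isContained_iff hn).mp hcopy
  refine ⟨v, c, Walk.isHamiltonianCycle_iff_isCycle_and_length_eq.mpr ⟨hc, ?_⟩⟩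
  rw [hlen, Fintype.card_congr e.symm, Fintype.card_fin]

lemma Fin.modNat_add_one_ne {m k : ℕ} [NeZero (m * k)] (hk : 2 ≤ k) (i : Fin (m * k)) :
    (i + 1).modNat ≠ i.modNat := by
  intro h
  have hmod : (i.val + 1) % k = i.val % k := by
    simpa [Fin.modNat, Fin.val_add, Nat.mod_mod_of_dvd _ (dvd_mul_left k m)] using
      congrArg Fin.val h
  have := (Nat.modEq_iff_dvd' (Nat.le_add_right i.val 1)).mp hmod.symm
  rw [Nat.add_sub_cancel_left, Nat.dvd_one] at this
  omega

theorem isHamiltonian_of_adj_of_ne {B : Type*} (β : V → B) {m : ℕ}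
    (hfib : ∀ v, Nat.card {w // β w = β v} = m) (hβ : ∃ v w, β v ≠ β w)
    (hV : 3 ≤ Fintype.card V) (hadj : ∀ v w, β v ≠ β w → G.Adj v w) : G.IsHamiltonian := by
  have hfib' (b : Set.range β) : Nat.card {v // Set.rangeFactorization β v = b} = m := by
    obtain ⟨_, v, rfl⟩ := b
    rw [← hfib v]
    exact Nat.card_congr (Equiv.subtypeEquivRight fun w => Subtype.ext_iff)
  let eV : V ≃ Set.range β × Fin m :=
    (Equiv.sigmaFiberEquiv (Set.rangeFactorization β)).symm.trans
      ((Equiv.sigmaCongrRight fun b => Finite.equivFinOfCardEq (hfib' b)).trans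
        (Equiv.sigmaEquivProd _ _))
  have heV (v : V) : ((eV v).1 : B) = β v := rfl
  set k := Nat.card (Set.range β)
  have hk : 2 ≤ k := by
    obtain ⟨v, w, hvw⟩ := hβ
    exact Finite.one_lt_card_iff_nontrivial.mpr
      ⟨⟨⟨β v, v, rfl⟩, ⟨β w, w, rfl⟩, fun h => hvw (congrArg Subtype.val h)⟩⟩
  -- Round-robin order: the `i`-th vertex lies in part `i % k`.
  let σ : Fin (m * k) ≃ V := finProdFinEquiv.symm.trans ((Equiv.prodComm _ _).trans
    (((Finite.equivFin _).symm.prodCongr (Equiv.refl _)).trans eV.symm))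
  have hσ (i : Fin (m * k)) : β (σ i) = (Finite.equivFin (Set.range β)).symm i.modNat := by
    rw [← heV]
    simp only [σ, Equiv.trans_apply, finProdFinEquiv_symm_apply, Equiv.prodComm_apply,
      Prod.swap_prod_mk, Equiv.prodCongr_apply, Prod.map, Equiv.apply_symm_apply]
  have hcard : Fintype.card V = m * k := by rw [Fintype.card_congr σ.symm, Fintype.card_fin]
  have : NeZero (m * k) := ⟨by omega⟩
  refine isHamiltonian_of_adj_add_one (hcard ▸ hV) σ fun i => hadj _ _ ?_
  rw [hσ, hσ, Ne, Subtype.ext_iff.not.symm, (Finite.equivFin _).symm.injective.eq_iff]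
  exact (Fin.modNat_add_one_ne hk i).symm

end Hamiltonian

lemma mem_frattini_iff {G : Type*} [Group G] {g : G} :
    g ∈ frattini G ↔ ∀ M : Subgroup G, IsCoatom M → g ∈ M := by
  simp [frattini, Order.radical, mem_iInf]

section FrattiniQuotient

variable {G : Type*} [Group G] [Finite G]

theorem map_mk'_frattini_eq_top_iff {K : Subgroup G} :
    K.map (QuotientGroup.mk' (frattini G)) = ⊤ ↔ K = ⊤ := by
  refine ⟨fun h => frattini_nongenerating ?_, fun h => h ▸ map_top_of_surjective _
    (QuotientGroup.mk'_surjective _)⟩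
  rw [← QuotientGroup.ker_mk' (frattini G), ← comap_map_eq (QuotientGroup.mk' (frattini G)) K, h,
    Subgroup.comap_top]

theorem closure_pair_eq_top_iff_frattini_quotient {g h : G} :
    closure {g, h} = ⊤ ↔ closure {(g : G ⧸ frattini G), (h : G ⧸ frattini G)} = ⊤ := by
  rw [← map_mk'_frattini_eq_top_iff, MonoidHom.map_closure, Set.image_pair]
  rfl

theorem not_isCyclic_frattini_quotient (hnc : ¬IsCyclic G) : ¬IsCyclic (G ⧸ frattini G) := by
  rw [isCyclic_iff_exists_zpowers_eq_top] at hnc ⊢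
  rintro ⟨x, hx⟩
  obtain ⟨g, rfl⟩ := QuotientGroup.mk'_surjective (frattini G) x
  rw [← MonoidHom.map_zpowers, map_mk'_frattini_eq_top_iff] at hx
  exact hnc ⟨g, hx⟩

end FrattiniQuotient

namespace IsPGroup

variable {p : ℕ} [hp : Fact p.Prime] {G : Type*} [Group G] [Finite G] (hG : IsPGroup p G)
include hG

theorem index_eq_of_isCoatom {M : Subgroup G} (hM : IsCoatom M) : M.index = p := by
  obtain ⟨a, ha⟩ := (hG.to_subgroup M).exists_card_eq
  obtain ⟨n, hn⟩ := hG.exists_card_eq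
  have han : a < n := by
    by_contra! hna
    refine hM.1 (eq_top_of_le_card M ?_)
    rw [ha, hn]
    exact Nat.pow_le_pow_right hp.out.pos hna
  -- `M` lies in a subgroup of order `p * |M|`, which must be `⊤`.
  obtain ⟨K, hK, hMK⟩ := Sylow.exists_subgroup_card_pow_succ (hn ▸ pow_dvd_pow p han) ha
  have hKtop : K = ⊤ := hM.2 K (lt_of_le_of_ne hMK fun h => by
    rw [← h, ha] at hK
    exact absurd (Nat.pow_right_injective hp.out.two_le hK) (by omega))
  have := M.card_mul_index
  rw [← card_top (G := G), ← hKtop, hK, ha, pow_succ] at this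
  exact Nat.eq_of_mul_eq_mul_left (pow_pos hp.out.pos a) this

theorem normal_of_isCoatom {M : Subgroup G} (hM : IsCoatom M) : M.Normal :=
  have := hG.isNilpotent
  NormalizerCondition.normal_of_coatom M Group.normalizerCondition_of_isNilpotent hM

theorem pow_eq_one_of_frattini_quotient (x : G ⧸ frattini G) : x ^ p = 1 := by
  induction x using QuotientGroup.induction_on with | H g => ?_
  rw [← QuotientGroup.mk_pow, QuotientGroup.eq_one_iff, mem_frattini_iff]
  intro M hM
  have := hG.normal_of_isCoatom hM
  exact hG.index_eq_of_isCoatom hM ▸ M.pow_index_mem g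

theorem commute_of_frattini_quotient (x y : G ⧸ frattini G) : Commute x y := by
  induction x using QuotientGroup.induction_on with | H g => ?_
  induction y using QuotientGroup.induction_on with | H h => ?_
  rw [Commute, SemiconjBy, ← QuotientGroup.mk_mul, ← QuotientGroup.mk_mul, QuotientGroup.eq,
    mem_frattini_iff]
  intro M hM
  have := hG.normal_of_isCoatom hM
  have : IsCyclic (G ⧸ M) :=
    isCyclic_of_prime_card (p := p) (by rw [← index_eq_card, hG.index_eq_of_isCoatom hM])
  rw [← QuotientGroup.eq, QuotientGroup.mk_mul, QuotientGroup.mk_mul]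
  exact isMulCommutative_iff.mp inferInstance _ _

end IsPGroup

section ExponentPrime

variable {p : ℕ} [hp : Fact p.Prime] {Q : Type*} [Group Q] (hexp : ∀ x : Q, x ^ p = 1)
include hexp

theorem zpowers_ne_top_of_natCard_eq_sq (hcard : Nat.card Q = p ^ 2) (x : Q) : zpowers x ≠ ⊤ := by
  intro h
  have := orderOf_le_of_pow_eq_one hp.out.pos (hexp x)
  rw [← Nat.card_zpowers, h, card_top, hcard] at this
  exact this.not_gt (lt_self_pow₀ hp.out.one_lt one_lt_two)

theorem natCard_le_sq_of_closure_pair_eq_top (hcomm : ∀ x y : Q, Commute x y) {a b : Q}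
    (hab : closure {a, b} = ⊤) : Nat.card Q ≤ p ^ 2 := by
  have : (zpowers b).Normal := ⟨fun x hx g => (hcomm g x).eq ▸ by simpa using hx⟩
  have hcoe : (Set.univ : Set Q) = (zpowers a : Set Q) * zpowers b := by
    rw [← mul_normal, zpowers_eq_closure, zpowers_eq_closure, ← Subgroup.closure_union,
      ← Set.insert_eq, hab, coe_top]
  have hord (x : Q) : Nat.card (zpowers x) ≤ p :=
    Nat.card_zpowers x ▸ orderOf_le_of_pow_eq_one hp.out.pos (hexp x)
  calc Nat.card Q = Nat.card (Set.univ : Set Q) := Nat.card_univ.symm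
    _ ≤ Nat.card (zpowers a) * Nat.card (zpowers b) := hcoe ▸ Set.natCard_mul_le
    _ ≤ p ^ 2 := sq p ▸ Nat.mul_le_mul (hord a) (hord b)

theorem natCard_eq_sq_of_closure_pair_eq_top [Finite Q] (hnc : ¬IsCyclic Q)
    (hcomm : ∀ x y : Q, Commute x y) {a b : Q} (hab : closure {a, b} = ⊤) :
    Nat.card Q = p ^ 2 := by
  obtain ⟨n, hn⟩ := IsPGroup.exists_card_eq (p := p) fun x => ⟨1, (pow_one p).symm ▸ hexp x⟩
  have hn2 : n ≤ 2 := (Nat.pow_le_pow_iff_right hp.out.one_lt).mp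
    (hn ▸ natCard_le_sq_of_closure_pair_eq_top hexp hcomm hab)
  rcases hn2.lt_or_eq with hlt | rfl
  · refine absurd (isCyclic_of_card_dvd_prime (p := p) ?_) hnc
    rw [hn]
    exact (pow_dvd_pow p (by omega : n ≤ 1)).trans (pow_one p).dvd
  · exact hn

end ExponentPrime

section OrderPrimeSq

variable {p : ℕ} [hp : Fact p.Prime] {Q : Type*} [Group Q] [Finite Q] (hexp : ∀ x : Q, x ^ p = 1)
include hexp

theorem zpowers_eq_of_mem_of_ne_one {x y : Q} (hy1 : y ≠ 1) (hy : y ∈ zpowers x) :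
    zpowers y = zpowers x := by
  refine eq_of_le_of_card_ge (zpowers_le.mpr hy) ?_
  rw [Nat.card_zpowers, Nat.card_zpowers, orderOf_eq_prime (hexp y) hy1]
  exact orderOf_le_of_pow_eq_one hp.out.pos (hexp x)

variable (hcard : Nat.card Q = p ^ 2)
include hcard

theorem closure_pair_eq_top_iff_of_natCard_eq_sq {x y : Q} :
    closure {x, y} = ⊤ ↔ x ≠ 1 ∧ y ∉ zpowers x := by
  have hne_top := zpowers_ne_top_of_natCard_eq_sq hexp hcard
  constructor
  · intro h
    refine ⟨?_, fun hy => hne_top x (eq_top_iff.mpr (h ▸ closure_le _ |>.mpr ?_))⟩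
    · rintro rfl
      refine hne_top y (eq_top_iff.mpr (h ▸ closure_le _ |>.mpr ?_))
      exact Set.insert_subset_iff.mpr ⟨one_mem _, Set.singleton_subset_iff.mpr (mem_zpowers y)⟩
    · exact Set.insert_subset_iff.mpr ⟨mem_zpowers x, Set.singleton_subset_iff.mpr hy⟩
  · rintro ⟨hx, hy⟩
    have hxH : zpowers x ≤ closure {x, y} := zpowers_le.mpr (subset_closure (by simp))
    have hpH : p ^ 1 < Nat.card (closure {x, y}) := by
      by_contra! hle
      refine hy (eq_of_le_of_card_ge hxH ?_ ▸ subset_closure (by simp))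
      rwa [Nat.card_zpowers, orderOf_eq_prime (hexp x) hx, ← pow_one p]
    obtain ⟨k, hk, hHk⟩ := (Nat.dvd_prime_pow hp.out).mp (hcard ▸ card_subgroup_dvd_card _)
    rw [hHk, Nat.pow_lt_pow_iff_right hp.out.one_lt] at hpH
    exact eq_top_of_card_eq _ (by rw [hHk, hcard, show k = 2 by omega])

end OrderPrimeSq

section GeneratingGraph

variable {p : ℕ} [Fact p.Prime] {G : Type*} [Group G] [Finite G] (hG : IsPGroup p G)
  (hcard : Nat.card (G ⧸ frattini G) = p ^ 2)
include hG hcard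

theorem closure_pair_eq_top_iff_frattini_quotient_ne_one {g h : G} :
    closure {g, h} = ⊤ ↔
      (g : G ⧸ frattini G) ≠ 1 ∧ (h : G ⧸ frattini G) ∉ zpowers (g : G ⧸ frattini G) :=
  closure_pair_eq_top_iff_frattini_quotient.trans
    (closure_pair_eq_top_iff_of_natCard_eq_sq hG.pow_eq_one_of_frattini_quotient hcard)

theorem genGraph_adj_iff_frattini_quotient {g h : G} :
    (genGraph G).Adj g h ↔
      (g : G ⧸ frattini G) ≠ 1 ∧ (h : G ⧸ frattini G) ∉ zpowers (g : G ⧸ frattini G) := by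
  rw [← closure_pair_eq_top_iff_frattini_quotient_ne_one hG hcard]
  refine ⟨And.right, fun hgh => ⟨?_, hgh⟩⟩
  rintro rfl
  exact ((closure_pair_eq_top_iff_frattini_quotient_ne_one hG hcard).mp hgh).2 (mem_zpowers _)

theorem mem_nonIso_iff {g : G} : g ∈ nonIso G ↔ (g : G ⧸ frattini G) ≠ 1 := by
  refine ⟨fun ⟨h, hgh⟩ => ((genGraph_adj_iff_frattini_quotient hG hcard).mp hgh).1, fun hg => ?_⟩
  obtain ⟨z, hz⟩ : ∃ z, z ∉ zpowers (g : G ⧸ frattini G) := by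
    by_contra! h
    exact zpowers_ne_top_of_natCard_eq_sq hG.pow_eq_one_of_frattini_quotient hcard _
      (eq_top_iff' _ |>.mpr h)
  obtain ⟨h, rfl⟩ := QuotientGroup.mk_surjective z
  exact ⟨h, (genGraph_adj_iff_frattini_quotient hG hcard).mpr ⟨hg, hz⟩⟩

theorem genGraph_adj_iff_zpowers_ne {g h : G} (hg : (g : G ⧸ frattini G) ≠ 1)
    (hh : (h : G ⧸ frattini G) ≠ 1) :
    (genGraph G).Adj g h ↔ zpowers (g : G ⧸ frattini G) ≠ zpowers (h : G ⧸ frattini G) := by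
  rw [genGraph_adj_iff_frattini_quotient hG hcard, and_iff_right hg]
  exact ⟨fun hnm heq => hnm (heq ▸ mem_zpowers _), fun hne hm =>
    hne (zpowers_eq_of_mem_of_ne_one hG.pow_eq_one_of_frattini_quotient hh hm).symm⟩

theorem natCard_nonIso : Nat.card (nonIso G) = Nat.card (frattini G) * (p ^ 2 - 1) := by
  have : nonIso G = QuotientGroup.mk ⁻¹' ({1}ᶜ : Set (G ⧸ frattini G)) :=
    Set.ext fun g => mem_nonIso_iff hG hcard
  rw [this, QuotientGroup.card_preimage_mk, Nat.card_coe_set_eq, Set.ncard_compl,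
    Set.ncard_singleton, hcard]

theorem natCard_fiber_zpowers (v : nonIso G) :
    Nat.card {w : nonIso G // zpowers (w.1 : G ⧸ frattini G) = zpowers (v.1 : G ⧸ frattini G)} =
      Nat.card (frattini G) * (p - 1) := by
  set L := zpowers (v.1 : G ⧸ frattini G)
  have hL : Nat.card L = p := by
    rw [Nat.card_zpowers, orderOf_eq_prime (hG.pow_eq_one_of_frattini_quotient _)
      ((mem_nonIso_iff hG hcard).mp v.2)]
  have e : {w : nonIso G // zpowers (w.1 : G ⧸ frattini G) = L} ≃
      QuotientGroup.mk ⁻¹' ((L : Set (G ⧸ frattini G)) \ {1}) :=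
    (Equiv.subtypeSubtypeEquivSubtypeInter (· ∈ nonIso G)
      fun g : G => zpowers (g : G ⧸ frattini G) = L).trans <|
      Equiv.subtypeEquivRight (q := fun g : G => (g : G ⧸ frattini G) ∈ (L : Set _) \ {1})
        fun g => by
        rw [mem_nonIso_iff hG hcard]
        exact ⟨fun ⟨h1, hgL⟩ => ⟨hgL ▸ mem_zpowers _, h1⟩, fun ⟨hgL, h1⟩ =>
          ⟨h1, zpowers_eq_of_mem_of_ne_one hG.pow_eq_one_of_frattini_quotient h1 hgL⟩⟩
  rw [Nat.card_congr e, QuotientGroup.card_preimage_mk, Nat.card_coe_set_eq,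
    Set.ncard_sdiff_singleton_of_mem (one_mem L), ← Nat.card_coe_set_eq, SetLike.coe_sort_coe, hL]

end GeneratingGraph

theorem IsPGroup.natCard_frattini_quotient_eq_sq {p : ℕ} [Fact p.Prime] {G : Type*} [Group G]
    [Finite G] (hG : IsPGroup p G) (hnc : ¬IsCyclic G) (h2 : TwoGenerated G) :
    Nat.card (G ⧸ frattini G) = p ^ 2 :=
  let ⟨_, _, hxy⟩ := h2
  natCard_eq_sq_of_closure_pair_eq_top hG.pow_eq_one_of_frattini_quotient
    (not_isCyclic_frattini_quotient hnc) hG.commute_of_frattini_quotient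
    (closure_pair_eq_top_iff_frattini_quotient.mp hxy)

open scoped Classical in
theorem stmt_13 (p : ℕ) (hp : p.Prime) (G : Type*) [Group G] [Fintype G]
    (hG : IsPGroup p G) (hnc : ¬ IsCyclic G) (h2 : TwoGenerated G) :
    (deltaGraph G).IsHamiltonian := by
  have : Fact p.Prime := ⟨hp⟩
  have hcard := hG.natCard_frattini_quotient_eq_sq hnc h2
  have hmem (v : nonIso G) := (mem_nonIso_iff hG hcard).mp v.2
  obtain ⟨x, y, hxy⟩ := h2
  have hxy : (genGraph G).Adj x y := (genGraph_adj_iff_frattini_quotient hG hcard).mpr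
    ((closure_pair_eq_top_iff_frattini_quotient_ne_one hG hcard).mp hxy)
  refine isHamiltonian_of_adj_of_ne (fun v : nonIso G => zpowers (v.1 : G ⧸ frattini G))
    (natCard_fiber_zpowers hG hcard) ⟨⟨x, y, hxy⟩, ⟨y, x, hxy.symm⟩, ?_⟩ ?_
    fun v w hvw => (genGraph_adj_iff_zpowers_ne hG hcard (hmem v) (hmem w)).mpr hvw
  · exact (genGraph_adj_iff_zpowers_ne hG hcard (hmem _) (hmem _)).mp hxy
  · have hp2 : 2 ^ 2 ≤ p ^ 2 := Nat.pow_le_pow_left hp.two_le 2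
    rw [← Nat.card_eq_fintype_card, natCard_nonIso hG hcard]
    exact (show 3 ≤ p ^ 2 - 1 by omega).trans (Nat.le_mul_of_pos_left _ Nat.card_pos)
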